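/- Let $n_I, n_\Gamma, n_{II}$ be positive integers. Let $H_{I,I}$ be a Hermitian $n_I \times n_I$ complex matrix, let $E$ be an $n_\Gamma \times n_I$ matrix with real entries (regarded as a complex matrix), let $H$ be a Hermitian $n_{II} \times n_{II}$ complex matrix, let $C$ be an $n_{II} \times n_\Gamma$ complex matrix whose associated linear map is injective, and let $s_1 > 0$ be a real number. Define $K_1 = -C^* (H - i s_1 I)^{-1} C$, $Q = (C^* C)^{-1}$, $A = -i\, C^* C$, and $B = s_1 I - A K_1^{-1}$. Then for every pair of differentiable functions $\phi : \mathbb{R} \to \mathbb{C}^{n_I}$, $f : \mathbb{R} \to \mathbb{C}^{n_\Gamma}$ satisfying $\phi'(t) = -i H_{I,I} \phi(t) - i E^T f(t)$ and $f'(t) = B f(t) + A E \phi(t)$ for all $t \ge 0$, the Lyapunov functional $W(t) = \phi(t)^* \phi(t) + f(t)^* Q f(t)$ is monotone non-increasing on $[0,\infty)$; in particular $\|\phi(t)\|^2 \le W(0)$ for all $t \ge 0$ (stability of the first-order absorbing boundary condition). -/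

import Mathlib

open Matrix

namespace FoABC

variable {n m : ℕ}

lemma shift_dot (M : Matrix (Fin m) (Fin n) ℂ) (x : Fin n → ℂ) (w : Fin m → ℂ) :
    star (M.mulVec x) ⬝ᵥ w = star x ⬝ᵥ Mᴴ.mulVec w := by
  rw [star_mulVec, dotProduct_mulVec]

lemma pair_dot (M : Matrix (Fin m) (Fin n) ℂ) (a : Fin m → ℂ) (b : Fin n → ℂ) :
    star a ⬝ᵥ M.mulVec b = star (star b ⬝ᵥ Mᴴ.mulVec a) := by
  rw [← shift_dot, star_dotProduct]

lemma re_star_dot_self_nonneg (w : Fin n → ℂ) : 0 ≤ (star w ⬝ᵥ w).re := by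
  simp only [dotProduct, Pi.star_apply, Complex.re_sum]
  refine Finset.sum_nonneg fun i _ => ?_
  rw [Complex.star_def, mul_comm, Complex.mul_conj]
  simp [Complex.normSq_nonneg]

lemma eq_zero_of_re_star_dot {w : Fin n → ℂ} (h : (star w ⬝ᵥ w).re = 0) : w = 0 := by
  have h2 : ∀ i ∈ Finset.univ, (0:ℝ) ≤ (star (w i) * w i).re := fun i _ => by
    rw [Complex.star_def, mul_comm, Complex.mul_conj]; simp [Complex.normSq_nonneg]
  rw [show star w ⬝ᵥ w = ∑ i, star (w i) * w i from rfl, Complex.re_sum] at h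
  funext i
  have := (Finset.sum_eq_zero_iff_of_nonneg h2).1 h i (Finset.mem_univ i)
  rw [Complex.star_def, mul_comm, Complex.mul_conj] at this
  simpa [Complex.normSq_eq_zero] using this

lemma herm_quad_im {M : Matrix (Fin n) (Fin n) ℂ} (hM : M.IsHermitian) (x : Fin n → ℂ) :
    (star x ⬝ᵥ M.mulVec x).im = 0 := by
  have h := pair_dot M x x
  rw [hM.eq] at h
  exact Complex.conj_eq_iff_im.1 h.symm

lemma dot_self_im (x : Fin n → ℂ) : (star x ⬝ᵥ x).im = 0 := by
  have := herm_quad_im (M := (1 : Matrix (Fin n) (Fin n) ℂ)) isHermitian_one x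
  rwa [one_mulVec] at this

lemma shift_quad_zero {M : Matrix (Fin n) (Fin n) ℂ} (hM : M.IsHermitian) {c : ℝ} (hc : c ≠ 0)
    {x : Fin n → ℂ} (h : star x ⬝ᵥ (M - (Complex.I * (c:ℂ)) • 1).mulVec x = 0) : x = 0 := by
  rw [sub_mulVec, dotProduct_sub, smul_mulVec, one_mulVec, dotProduct_smul,
    smul_eq_mul] at h
  have him := congrArg Complex.im h
  rw [Complex.sub_im, herm_quad_im hM] at him
  have h2 : (Complex.I * (c:ℂ) * (star x ⬝ᵥ x)).im = c * (star x ⬝ᵥ x).re := by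
    simp [Complex.mul_im, Complex.mul_re, dot_self_im x]
  rw [h2] at him
  have hre : (star x ⬝ᵥ x).re = 0 := by
    have him2 : c * (star x ⬝ᵥ x).re = 0 := by simpa using him.symm
    rcases mul_eq_zero.1 him2 with h' | h'
    · exact absurd h' hc
    · exact h'
  exact eq_zero_of_re_star_dot hre

lemma inj_of_quad {M : Matrix (Fin n) (Fin n) ℂ}
    (h0 : ∀ v : Fin n → ℂ, M.mulVec v = 0 → v = 0) : Function.Injective M.mulVec := by
  intro a b hab
  have h1 : M.mulVec (a - b) = 0 := by rw [mulVec_sub, hab, sub_self]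
  exact sub_eq_zero.1 (h0 _ h1)

lemma hasDerivAt_dot {u v : ℝ → (Fin n → ℂ)} {u' v' : Fin n → ℂ} {t : ℝ}
    (hu : HasDerivAt u u' t) (hv : HasDerivAt v v' t) :
    HasDerivAt (fun s => star (u s) ⬝ᵥ v s) (star u' ⬝ᵥ v t + star (u t) ⬝ᵥ v') t := by
  have hu' := hasDerivAt_pi.1 hu
  have hv' := hasDerivAt_pi.1 hv
  have h : HasDerivAt (fun s => ∑ i, star (u s i) * v s i)
      (∑ i, (star (u' i) * v t i + star (u t i) * v' i)) t :=
    HasDerivAt.fun_sum fun i _ => ((hu' i).star.mul (hv' i))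
  simpa [dotProduct, Finset.sum_add_distrib] using h

lemma hasDerivAt_mulVec (M : Matrix (Fin m) (Fin n) ℂ) {v : ℝ → (Fin n → ℂ)}
    {v' : Fin n → ℂ} {t : ℝ} (hv : HasDerivAt v v' t) :
    HasDerivAt (fun s => M.mulVec (v s)) (M.mulVec v') t := by
  have hv' := hasDerivAt_pi.1 hv
  refine hasDerivAt_pi.2 fun i => ?_
  have h : HasDerivAt (fun s => ∑ j, M i j * v s j) (∑ j, M i j * v' j) t :=
    HasDerivAt.fun_sum fun j _ => (hv' j).const_mul (M i j)
  simpa [mulVec, dotProduct] using h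

lemma hasDerivAt_re {g : ℝ → ℂ} {g' : ℂ} {t : ℝ} (h : HasDerivAt g g' t) :
    HasDerivAt (fun s => (g s).re) g'.re t :=
  Complex.reCLM.hasFDerivAt.comp_hasDerivAt t h

lemma star_re (z : ℂ) : (star z).re = z.re := by simp [Complex.star_def]

lemma star_im (z : ℂ) : (star z).im = -z.im := by simp [Complex.star_def]

lemma neg_I_mul_re (z : ℂ) : ((-Complex.I) * z).re = z.im := by simp [Complex.mul_re]

lemma ofReal_mul_re' (r : ℝ) (z : ℂ) : ((r:ℂ) * z).re = r * z.re := by simp [Complex.mul_re]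

lemma two_re_I (z : ℂ) : 2 * (Complex.I * z).re = (Complex.I * (z - star z)).re := by
  simp [Complex.mul_re, Complex.sub_re, Complex.sub_im, Complex.star_def]
  ring

end FoABC

open FoABC

/-- Stability of the first-order absorbing boundary condition: with
`K₁ = -Cᴴ(H - is₁I)⁻¹C`, `Q = (CᴴC)⁻¹`, `A = -i CᴴC`, `B = s₁ I - A K₁⁻¹`, the Lyapunov
functional `W(t) = φ(t)*φ(t) + f(t)* Q f(t)` is non-increasing along solutions of
`φ' = -i H_{I,I} φ - i Eᵀ f`, `f' = B f + A E φ` on `[0, ∞)`; in particular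
`‖φ(t)‖² ≤ W(0)` for all `t ≥ 0`. -/
theorem first_order_abc_stability
    (nI nΓ nII : ℕ) (hnI : 0 < nI) (hnΓ : 0 < nΓ) (hnII : 0 < nII)
    (HII : Matrix (Fin nI) (Fin nI) ℂ) (hHII : HII.IsHermitian)
    (E : Matrix (Fin nΓ) (Fin nI) ℂ) (hE : ∀ i j, (E i j).im = 0)
    (H : Matrix (Fin nII) (Fin nII) ℂ) (hH : H.IsHermitian)
    (C : Matrix (Fin nII) (Fin nΓ) ℂ) (hC : Function.Injective C.mulVec)
    (s1 : ℝ) (hs1 : 0 < s1)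
    (K1 : Matrix (Fin nΓ) (Fin nΓ) ℂ)
    (hK1 : K1 = -(Cᴴ * (H - (Complex.I * (s1 : ℂ)) • (1 : Matrix (Fin nII) (Fin nII) ℂ))⁻¹ * C))
    (Q A B : Matrix (Fin nΓ) (Fin nΓ) ℂ)
    (hQ : Q = (Cᴴ * C)⁻¹)
    (hA : A = (-Complex.I) • (Cᴴ * C))
    (hB : B = (s1 : ℂ) • (1 : Matrix (Fin nΓ) (Fin nΓ) ℂ) - A * K1⁻¹) :
    ∀ (φ : ℝ → EuclideanSpace ℂ (Fin nI)) (f : ℝ → (Fin nΓ → ℂ)),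
      (∀ t : ℝ, 0 ≤ t → HasDerivAt φ
        ((WithLp.toLp 2 ((-Complex.I) • (HII.mulVec (φ t)) +
          (-Complex.I) • (Eᵀ.mulVec (f t))) : EuclideanSpace ℂ (Fin nI))) t) →
      (∀ t : ℝ, 0 ≤ t → HasDerivAt f (B.mulVec (f t) + A.mulVec (E.mulVec (φ t))) t) →
      AntitoneOn
        (fun t : ℝ => (star (φ t) ⬝ᵥ (φ t : Fin nI → ℂ) + star (f t) ⬝ᵥ Q.mulVec (f t)).re)
        (Set.Ici (0 : ℝ)) ∧
      ∀ t : ℝ, 0 ≤ t →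
        ‖φ t‖ ^ 2 ≤ (star (φ 0) ⬝ᵥ (φ 0 : Fin nI → ℂ) + star (f 0) ⬝ᵥ Q.mulVec (f 0)).re := by
  intro φ f hφ hf
  have hs1' : s1 ≠ 0 := ne_of_gt hs1
  set N : Matrix (Fin nII) (Fin nII) ℂ :=
    H - (Complex.I * (s1 : ℂ)) • (1 : Matrix (Fin nII) (Fin nII) ℂ) with hNdef
  -- invertibility of N
  have hNdet : IsUnit N.det := by
    rw [← isUnit_iff_isUnit_det, ← mulVec_injective_iff_isUnit]
    exact inj_of_quad fun v hv => shift_quad_zero hH hs1' (by rw [hv, dotProduct_zero])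
  have hNH : Nᴴ = H - (Complex.I * ((-s1 : ℝ) : ℂ)) • (1 : Matrix (Fin nII) (Fin nII) ℂ) := by
    rw [hNdef, conjTranspose_sub, conjTranspose_smul, conjTranspose_one, hH.eq]
    push_cast
    rw [show star (Complex.I * (s1:ℂ)) = -(Complex.I * (s1:ℂ)) by
      simp [Complex.star_def, Complex.ext_iff]]
    ring_nf
  have hNHdet : IsUnit (Nᴴ).det := by
    rw [det_conjTranspose]
    exact hNdet.star
  -- invertibility of CᴴC
  have hCCdet : IsUnit (Cᴴ * C).det := by
    rw [← isUnit_iff_isUnit_det, ← mulVec_injective_iff_isUnit]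
    refine inj_of_quad fun v hv => ?_
    have h1 : star (C.mulVec v) ⬝ᵥ (C.mulVec v) = 0 := by
      rw [shift_dot, mulVec_mulVec, hv, dotProduct_zero]
    have h2 : C.mulVec v = 0 := eq_zero_of_re_star_dot (by rw [h1]; simp)
    exact hC (by rw [h2, mulVec_zero])
  have hQCC : Q * (Cᴴ * C) = 1 := by rw [hQ]; exact nonsing_inv_mul _ hCCdet
  have hCCQ : (Cᴴ * C) * Q = 1 := by rw [hQ]; exact mul_nonsing_inv _ hCCdet
  have hQH : Qᴴ = Q := by
    rw [hQ, conjTranspose_nonsing_inv, conjTranspose_mul, conjTranspose_conjTranspose]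
  -- invertibility of K1
  have hK1det : IsUnit K1.det := by
    rw [← isUnit_iff_isUnit_det, ← mulVec_injective_iff_isUnit]
    refine inj_of_quad fun v hv => ?_
    have hv' : (Cᴴ * N⁻¹ * C).mulVec v = 0 := by
      rw [show Cᴴ * N⁻¹ * C = -K1 by rw [hK1, neg_neg], neg_mulVec, hv, neg_zero]
    set w := C.mulVec v with hw
    set x := N⁻¹.mulVec w with hx
    have hwx : w = N.mulVec x := by
      rw [hx, mulVec_mulVec, mul_nonsing_inv _ hNdet, one_mulVec]
    have h0 : star v ⬝ᵥ (Cᴴ * N⁻¹ * C).mulVec v = 0 := by rw [hv', dotProduct_zero]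
    have h1 : star v ⬝ᵥ (Cᴴ * N⁻¹ * C).mulVec v = star x ⬝ᵥ Nᴴ.mulVec x := by
      rw [← mulVec_mulVec, ← mulVec_mulVec, ← shift_dot, ← hw, ← hx, hwx, shift_dot]
    have h2 : star x ⬝ᵥ (H - (Complex.I * ((-s1:ℝ):ℂ)) • 1).mulVec x = 0 := by
      rw [← hNH, ← h1, h0]
    have hx0 : x = 0 := shift_quad_zero hH (neg_ne_zero.2 hs1') h2
    have hw0 : w = 0 := by rw [hwx, hx0, mulVec_zero]
    exact hC (by rw [mulVec_zero, ← hw, hw0])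
  have hK1Hdet : IsUnit (K1ᴴ).det := by rw [det_conjTranspose]; exact hK1det.star
  -- S and P
  set S : Matrix (Fin nII) (Fin nΓ) ℂ := (Nᴴ)⁻¹ * C with hSdef
  have hSH : Sᴴ = Cᴴ * N⁻¹ := by
    rw [hSdef, conjTranspose_mul, ← conjTranspose_nonsing_inv, conjTranspose_conjTranspose]
  have hK1S : K1 = -(Sᴴ * C) := by rw [hK1, hSH, Matrix.mul_assoc]
  have hK1HS : K1ᴴ = -(Cᴴ * S) := by
    rw [hK1S, conjTranspose_neg, conjTranspose_mul, conjTranspose_conjTranspose]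
  have hCNS : C = Nᴴ * S := by
    rw [hSdef, ← Matrix.mul_assoc, mul_nonsing_inv _ hNHdet, Matrix.one_mul]
  have hCH : Cᴴ = Sᴴ * N := by
    conv_lhs => rw [hCNS]
    rw [conjTranspose_mul, conjTranspose_conjTranspose]
  set P : Matrix (Fin nII) (Fin nII) ℂ := C * Q * Cᴴ with hPdef
  have hPH : Pᴴ = P := by
    rw [hPdef, conjTranspose_mul, conjTranspose_mul, hQH, conjTranspose_conjTranspose,
      Matrix.mul_assoc]
  have hPP : P * P = P := by
    have h1 : P * P = C * ((Q * (Cᴴ * C)) * (Q * Cᴴ)) := by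
      rw [hPdef]; simp only [Matrix.mul_assoc]
    rw [h1, hQCC, Matrix.one_mul, hPdef, Matrix.mul_assoc]
  have h1P_H : ((1 : Matrix (Fin nII) (Fin nII) ℂ) - P)ᴴ = 1 - P := by
    rw [conjTranspose_sub, conjTranspose_one, hPH]
  have h1P_P : ((1 : Matrix (Fin nII) (Fin nII) ℂ) - P) * (1 - P) = 1 - P := by
    rw [Matrix.mul_sub, Matrix.mul_one, Matrix.sub_mul, Matrix.one_mul, hPP]
    abel
  -- Q*A and Q*B
  have hQA : Q * A = (-Complex.I) • (1 : Matrix (Fin nΓ) (Fin nΓ) ℂ) := by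
    rw [hA, Matrix.mul_smul, hQCC]
  have hQB : Q * B = (s1 : ℂ) • Q + Complex.I • K1⁻¹ := by
    rw [hB, Matrix.mul_sub, Matrix.mul_smul, Matrix.mul_one, ← Matrix.mul_assoc, hQA,
      Matrix.smul_mul, Matrix.one_mul, neg_smul, sub_neg_eq_add]
  -- key matrix identity
  have e1 : K1 * Q * K1ᴴ = Sᴴ * P * S := by
    rw [hK1HS, hK1S, hPdef]
    simp only [Matrix.neg_mul, Matrix.mul_neg, neg_neg, Matrix.mul_assoc]
  have hNH2 : Nᴴ = H + (Complex.I * (s1:ℂ)) • (1 : Matrix (Fin nII) (Fin nII) ℂ) := by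
    rw [hNH]
    push_cast
    rw [show Complex.I * (-(s1:ℂ)) = -(Complex.I * (s1:ℂ)) by ring, neg_smul, sub_neg_eq_add]
  have hNN : Nᴴ - N = (Complex.I * (s1:ℂ) + Complex.I * (s1:ℂ)) • (1 : Matrix (Fin nII) (Fin nII) ℂ) := by
    rw [hNH2, hNdef, add_smul]
    abel
  have hEH : Eᴴ = Eᵀ := by
    ext i j
    rw [conjTranspose_apply, transpose_apply, Complex.star_def]
    exact Complex.conj_eq_iff_im.2 (hE j i)
  have e2 : K1ᴴ - K1 = (Complex.I * (s1:ℂ) + Complex.I * (s1:ℂ)) • (Sᴴ * S) := by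
    have h1 : K1ᴴ - K1 = Sᴴ * Nᴴ * S - Sᴴ * N * S := by
      rw [hK1HS, hK1S, hCH]
      conv_lhs => rw [hCNS]
      simp only [Matrix.mul_assoc]
      abel
    have h2 : Sᴴ * (Nᴴ - N) * S = Sᴴ * Nᴴ * S - Sᴴ * N * S := by
      rw [Matrix.mul_sub Sᴴ Nᴴ N, Matrix.sub_mul (Sᴴ * Nᴴ) (Sᴴ * N) S]
    rw [h1, ← h2, hNN, Matrix.mul_smul, Matrix.mul_one, Matrix.smul_mul]
  have hM0 : (2*(s1:ℂ)) • (K1 * Q * K1ᴴ) + Complex.I • (K1ᴴ - K1)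
      = (-(2*(s1:ℂ))) • (Sᴴ * ((1 : Matrix (Fin nII) (Fin nII) ℂ) - P) * S) := by
    rw [e1, e2, smul_smul]
    have hc : Complex.I * (Complex.I * (s1:ℂ) + Complex.I * (s1:ℂ)) = -(2*(s1:ℂ)) := by
      linear_combination (2*(s1:ℂ)) * Complex.I_mul_I
    rw [hc]
    have h3 : Sᴴ * ((1 : Matrix (Fin nII) (Fin nII) ℂ) - P) * S = Sᴴ * S - Sᴴ * P * S := by
      rw [Matrix.mul_sub, Matrix.mul_one, Matrix.sub_mul]
    rw [h3, smul_sub]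
    simp only [neg_smul]
    abel
  have key : ∀ (x : Fin nI → ℂ) (y : Fin nΓ → ℂ),
      ((star ((-Complex.I) • (HII *ᵥ x) + (-Complex.I) • (Eᵀ *ᵥ y)) ⬝ᵥ x
        + star x ⬝ᵥ ((-Complex.I) • (HII *ᵥ x) + (-Complex.I) • (Eᵀ *ᵥ y)))
       + (star (B *ᵥ y + A *ᵥ (E *ᵥ x)) ⬝ᵥ (Q *ᵥ y)
        + star y ⬝ᵥ (Q *ᵥ (B *ᵥ y + A *ᵥ (E *ᵥ x))))).re ≤ 0 := by
    intro x y
    set x' : Fin nI → ℂ := (-Complex.I) • (HII *ᵥ x) + (-Complex.I) • (Eᵀ *ᵥ y) with hx'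
    set y' : Fin nΓ → ℂ := B *ᵥ y + A *ᵥ (E *ᵥ x) with hy'
    have c1 : star x' ⬝ᵥ x = star (star x ⬝ᵥ x') := star_dotProduct x' x
    have c2 : star y' ⬝ᵥ (Q *ᵥ y) = star (star y ⬝ᵥ (Q *ᵥ y')) := by
      rw [pair_dot Q y' y, hQH]
    have hT1 : star x ⬝ᵥ x' = (-Complex.I) * (star x ⬝ᵥ (HII *ᵥ x))
        + (-Complex.I) * (star x ⬝ᵥ (Eᵀ *ᵥ y)) := by
      rw [hx', dotProduct_add, dotProduct_smul, dotProduct_smul, smul_eq_mul, smul_eq_mul]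
    have hQy' : Q *ᵥ y' = (s1:ℂ) • (Q *ᵥ y) + Complex.I • (K1⁻¹ *ᵥ y)
        + (-Complex.I) • (E *ᵥ x) := by
      rw [hy', mulVec_add, mulVec_mulVec y Q B, mulVec_mulVec (E *ᵥ x) Q A, hQB, hQA,
        add_mulVec, smul_mulVec, smul_mulVec, smul_mulVec, one_mulVec]
    have hT2 : star y ⬝ᵥ (Q *ᵥ y') = (s1:ℂ) * (star y ⬝ᵥ (Q *ᵥ y))
        + Complex.I * (star y ⬝ᵥ (K1⁻¹ *ᵥ y)) + (-Complex.I) * (star y ⬝ᵥ (E *ᵥ x)) := by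
      rw [hQy', dotProduct_add, dotProduct_add, dotProduct_smul, dotProduct_smul,
        dotProduct_smul, smul_eq_mul, smul_eq_mul, smul_eq_mul]
    have hz3 : star y ⬝ᵥ (E *ᵥ x) = star (star x ⬝ᵥ (Eᵀ *ᵥ y)) := by
      rw [pair_dot E y x, hEH]
    set u : Fin nΓ → ℂ := (K1ᴴ)⁻¹ *ᵥ y with hu
    have hyu : K1ᴴ *ᵥ u = y := by
      rw [hu, mulVec_mulVec, mul_nonsing_inv _ hK1Hdet, one_mulVec]
    have sandwich : ∀ M : Matrix (Fin nΓ) (Fin nΓ) ℂ,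
        star y ⬝ᵥ (M *ᵥ y) = star u ⬝ᵥ ((K1 * M * K1ᴴ) *ᵥ u) := by
      intro M
      conv_lhs => rw [← hyu]
      rw [shift_dot K1ᴴ u, conjTranspose_conjTranspose,
        mulVec_mulVec u M K1ᴴ, mulVec_mulVec u K1 (M * K1ᴴ), Matrix.mul_assoc]
    have q1 : star y ⬝ᵥ (Q *ᵥ y) = star u ⬝ᵥ ((K1 * Q * K1ᴴ) *ᵥ u) := sandwich Q
    have q2 : star y ⬝ᵥ (K1⁻¹ *ᵥ y) = star u ⬝ᵥ (K1ᴴ *ᵥ u) := by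
      rw [sandwich K1⁻¹, mul_nonsing_inv _ hK1det, Matrix.one_mul]
    have q2' : star (star y ⬝ᵥ (K1⁻¹ *ᵥ y)) = star u ⬝ᵥ (K1 *ᵥ u) := by
      rw [q2, pair_dot K1ᴴ u u, conjTranspose_conjTranspose, star_star]
    -- assemble the real part
    set v0 : Fin nII → ℂ := ((1 : Matrix (Fin nII) (Fin nII) ℂ) - P) *ᵥ (S *ᵥ u) with hv0
    have hfin : star u ⬝ᵥ ((Sᴴ * ((1 : Matrix (Fin nII) (Fin nII) ℂ) - P) * S) *ᵥ u)
        = star v0 ⬝ᵥ v0 := by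
      rw [← mulVec_mulVec u (Sᴴ * (1 - P)) S, ← mulVec_mulVec (S *ᵥ u) Sᴴ (1 - P),
        ← shift_dot S u, hv0]
      conv_lhs => rw [← h1P_P, ← mulVec_mulVec (S *ᵥ u) (1 - P) (1 - P)]
      rw [shift_dot (1 - P) (S *ᵥ u), h1P_H]
    have hnn : 0 ≤ (star v0 ⬝ᵥ v0).re := re_star_dot_self_nonneg v0
    -- main real computation
    rw [c1, c2, Complex.add_re, Complex.add_re, Complex.add_re, star_re, star_re]
    have hb0 : ((-Complex.I) * (star x ⬝ᵥ (HII *ᵥ x))).re = 0 := by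
      rw [neg_I_mul_re, herm_quad_im hHII]
    have hr1 : (star x ⬝ᵥ x').re = (star x ⬝ᵥ (Eᵀ *ᵥ y)).im := by
      rw [hT1, Complex.add_re, hb0, zero_add, neg_I_mul_re]
    have hr2 : (star y ⬝ᵥ (Q *ᵥ y')).re = s1 * (star u ⬝ᵥ ((K1 * Q * K1ᴴ) *ᵥ u)).re
        + (Complex.I * (star y ⬝ᵥ (K1⁻¹ *ᵥ y))).re - (star x ⬝ᵥ (Eᵀ *ᵥ y)).im := by
      rw [hT2, Complex.add_re, Complex.add_re, ofReal_mul_re', q1, neg_I_mul_re, hz3,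
        star_im]
      ring
    rw [hr1, hr2]
    have q3 : star (star u ⬝ᵥ (K1ᴴ *ᵥ u)) = star u ⬝ᵥ (K1 *ᵥ u) := by
      rw [pair_dot K1ᴴ u u, conjTranspose_conjTranspose, star_star]
    have h2I : 2 * (Complex.I * (star y ⬝ᵥ (K1⁻¹ *ᵥ y))).re
        = (star u ⬝ᵥ ((Complex.I • (K1ᴴ - K1)) *ᵥ u)).re := by
      rw [two_re_I, q2', q2, ← dotProduct_sub, ← sub_mulVec, smul_mulVec,
        dotProduct_smul, smul_eq_mul]
    have h2s : 2 * (s1 * (star u ⬝ᵥ ((K1 * Q * K1ᴴ) *ᵥ u)).re)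
        = (star u ⬝ᵥ (((2*(s1:ℂ)) • (K1 * Q * K1ᴴ)) *ᵥ u)).re := by
      rw [smul_mulVec, dotProduct_smul, smul_eq_mul,
        show ((2:ℂ)*(s1:ℂ)) = (((2*s1 : ℝ)):ℂ) by push_cast; ring, ofReal_mul_re']
      ring
    have hfin2 : (star u ⬝ᵥ (((2*(s1:ℂ)) • (K1 * Q * K1ᴴ)) *ᵥ u)).re
        + (star u ⬝ᵥ ((Complex.I • (K1ᴴ - K1)) *ᵥ u)).re
        = -(2*s1) * (star v0 ⬝ᵥ v0).re := by
      rw [← Complex.add_re, ← dotProduct_add, ← add_mulVec, hM0, smul_mulVec,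
        dotProduct_smul, smul_eq_mul, hfin,
        show (-(2*(s1:ℂ))) = (((-(2*s1) : ℝ)):ℂ) by push_cast; ring, ofReal_mul_re']
    have hprod : 0 ≤ 2 * s1 * (star v0 ⬝ᵥ v0).re :=
      mul_nonneg (by linarith) hnn
    linarith [h2I, h2s, hfin2, hprod]
  -- positivity of the Q-form
  have hCCpos : ∀ g : Fin nΓ → ℂ, 0 ≤ (star ((Cᴴ * C) *ᵥ g) ⬝ᵥ g).re := by
    intro g
    have h1 : star ((Cᴴ * C) *ᵥ g) ⬝ᵥ g = star (C *ᵥ g) ⬝ᵥ (C *ᵥ g) := by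
      rw [shift_dot (Cᴴ * C) g g, conjTranspose_mul, conjTranspose_conjTranspose,
        ← mulVec_mulVec g Cᴴ C, shift_dot C g (C *ᵥ g)]
    rw [h1]
    exact re_star_dot_self_nonneg _
  have hQpos : ∀ y : Fin nΓ → ℂ, 0 ≤ (star y ⬝ᵥ (Q *ᵥ y)).re := by
    intro y
    have hyg : (Cᴴ * C) *ᵥ (Q *ᵥ y) = y := by
      rw [mulVec_mulVec y (Cᴴ * C) Q, hCCQ, one_mulVec]
    have h2 : star y ⬝ᵥ (Q *ᵥ y) = star ((Cᴴ * C) *ᵥ (Q *ᵥ y)) ⬝ᵥ (Q *ᵥ y) := by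
      rw [hyg]
    rw [h2]
    exact hCCpos _
  -- norm identity
  have hnorm : ∀ x : EuclideanSpace ℂ (Fin nI), ‖x‖^2 = (star x ⬝ᵥ (x : Fin nI → ℂ)).re := by
    intro x
    rw [EuclideanSpace.norm_eq, Real.sq_sqrt (Finset.sum_nonneg fun i _ => sq_nonneg _)]
    simp only [dotProduct, Pi.star_apply, Complex.re_sum]
    refine Finset.sum_congr rfl fun i _ => ?_
    rw [Complex.star_def, mul_comm, Complex.mul_conj, Complex.sq_norm]
    simp
  -- derivative of the Lyapunov functional
  set L : EuclideanSpace ℂ (Fin nI) →L[ℝ] (Fin nI → ℂ) :=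
    ((EuclideanSpace.equiv (Fin nI) ℂ).toContinuousLinearMap.restrictScalars ℝ) with hL
  have hWt : ∀ t : ℝ, 0 ≤ t → HasDerivAt
      (fun s : ℝ => (star (φ s) ⬝ᵥ (φ s : Fin nI → ℂ) + star (f s) ⬝ᵥ Q.mulVec (f s)).re)
      (((star ((-Complex.I) • (HII *ᵥ (φ t : Fin nI → ℂ)) + (-Complex.I) • (Eᵀ *ᵥ f t)) ⬝ᵥ (φ t : Fin nI → ℂ)
        + star (φ t : Fin nI → ℂ) ⬝ᵥ ((-Complex.I) • (HII *ᵥ (φ t : Fin nI → ℂ)) + (-Complex.I) • (Eᵀ *ᵥ f t)))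
       + (star (B *ᵥ f t + A *ᵥ (E *ᵥ (φ t : Fin nI → ℂ))) ⬝ᵥ (Q *ᵥ f t)
        + star (f t) ⬝ᵥ (Q *ᵥ (B *ᵥ f t + A *ᵥ (E *ᵥ (φ t : Fin nI → ℂ)))))).re) t := by
    intro t ht
    have hψ : HasDerivAt (F := Fin nI → ℂ) (fun s => (φ s : Fin nI → ℂ))
        ((-Complex.I) • (HII *ᵥ (φ t : Fin nI → ℂ)) + (-Complex.I) • (Eᵀ *ᵥ f t)) t :=
      L.hasFDerivAt.comp_hasDerivAt t (hφ t ht)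
    have hdot1 := hasDerivAt_dot hψ hψ
    have hdot2 := hasDerivAt_dot (hf t ht) (hasDerivAt_mulVec Q (hf t ht))
    exact hasDerivAt_re (hdot1.add hdot2)
  have hanti : AntitoneOn
      (fun t : ℝ => (star (φ t) ⬝ᵥ (φ t : Fin nI → ℂ) + star (f t) ⬝ᵥ Q.mulVec (f t)).re)
      (Set.Ici (0 : ℝ)) := by
    refine antitoneOn_of_deriv_nonpos (convex_Ici 0) ?_ ?_ ?_
    · exact fun t ht => ((hWt t ht).continuousAt.continuousWithinAt)
    · intro t ht
      rw [interior_Ici] at ht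
      exact ((hWt t ht.le).differentiableAt.differentiableWithinAt)
    · intro t ht
      rw [interior_Ici] at ht
      rw [(hWt t ht.le).deriv]
      exact key (φ t) (f t)
  refine ⟨hanti, fun t ht => ?_⟩
  have h1 := hanti (Set.self_mem_Ici) (Set.mem_Ici.2 ht) ht
  have h2 := hQpos (f t)
  have h3 := hnorm (φ t)
  simp only [Complex.add_re] at h1 ⊢
  linarith
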